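/- Define ρ(z) = log((1 + (1 − z²)^{1/2})/z) − (1 − z²)^{1/2} for z ∈ ℂ, using the principal branches of log and the square root. Let Ω ⊂ ℂ be a compact subset of the open upper half-plane {z : Im z > 0} such that for every z ∈ Ω one has 1 − z² ∉ (−∞, 0] and (1 + (1 − z²)^{1/2})/z ∉ (−∞, 0]. Let V₀ > 0. Then there exist constants C > 0 and ν₀ > 0 such that for all real ν ≥ ν₀ and all z ∈ Ω, | e^{−ν(ρ(z̃) − ρ(z))} − 1 + V₀ (1 − z²)^{1/2} / (2 ν z²) − V₀² (1 − z²) / (8 ν² z⁴) | ≤ C / ν³, where z̃ = z (1 − V₀/(ν² z²))^{1/2} with the principal square root. -/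

import Mathlib

/-!
With `s = V₀/ν²` one has `z̃ = z (1 − s/z²)^{1/2}`, so `ρ(z̃) − ρ(z)` is holomorphic in `s` on a
disc whose radius, and a bound on which, are uniform over the compact set `Ω` (tube lemma).
Since `ρ'(w) = −(1 − w²)^{1/2}/w`, its derivative at `s = 0` is `d = (1 − z²)^{1/2}/(2z²)`, and
Cauchy's estimates give `ρ(z̃) − ρ(z) = s d + O(s²)` uniformly on `Ω`. Hence the exponent is
`x + O(ν⁻³)` with `x = −ν s d = O(ν⁻¹)`, and `e^{x + O(ν⁻³)} = 1 + x + x²/2 + O(ν⁻³)`, where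
`x²/2 = V₀²(1 − z²)/(8ν²z⁴)`.
-/

open Complex

/-- The phase function `ρ(z) = log((1 + (1 − z²)^{1/2})/z) − (1 − z²)^{1/2}` of the uniform
(Olver) asymptotics of Bessel functions of large order, with principal branches of the
logarithm and the square root. -/
noncomputable def olverRho (z : ℂ) : ℂ :=
  Complex.log ((1 + (1 - z ^ 2) ^ ((1 : ℂ) / 2)) / z) - (1 - z ^ 2) ^ ((1 : ℂ) / 2)

/-- The rescaled variable `z̃ = z (1 − V₀/(ν² z²))^{1/2}`, i.e. `z̃(z) = (z² − V₀/ν²)^{1/2}`,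
carrying the information about the step potential of height `V₀`. -/
noncomputable def ztilde (V₀ ν : ℝ) (z : ℂ) : ℂ :=
  z * (1 - (V₀ : ℂ) / ((ν : ℂ) ^ 2 * z ^ 2)) ^ ((1 : ℂ) / 2)

open Metric

theorem Complex.norm_sub_sub_smul_deriv_le {E : Type*} [NormedAddCommGroup E] [NormedSpace ℂ E]
    [CompleteSpace E] {f : ℂ → E} {c w : ℂ} {r M : ℝ} (hr : 0 < r)
    (hf : DifferentiableOn ℂ f (closedBall c r)) (hM : ∀ z ∈ sphere c r, ‖f z‖ ≤ M)
    (hw : ‖w - c‖ ≤ r / 2) :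
    ‖f w - f c - (w - c) • deriv f c‖ ≤ 2 * M / r ^ 2 * ‖w - c‖ ^ 2 := by
  -- Cauchy's estimates bound the `n`-th Taylor term by `M qⁿ`, so the tail is geometric.
  set q := ‖w - c‖ / r
  set a : ℕ → E := fun n ↦ (n.factorial : ℂ)⁻¹ • (w - c) ^ n • iteratedDeriv n f c
  have hq : q ≤ 1 / 2 := by rw [div_le_iff₀ hr]; linarith
  have ha : ∀ n, ‖a n‖ ≤ M * q ^ n := fun n ↦ by
    have hcauchy := norm_iteratedDeriv_le_of_forall_mem_sphere_norm_le n hr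
      (hf.diffContOnCl_ball subset_rfl) hM
    calc ‖a n‖ = (n.factorial : ℝ)⁻¹ * ‖w - c‖ ^ n * ‖iteratedDeriv n f c‖ := by
          simp [a, norm_smul, mul_assoc]
      _ ≤ (n.factorial : ℝ)⁻¹ * ‖w - c‖ ^ n * (n.factorial * M / r ^ n) := by gcongr
      _ = M * q ^ n := by simp only [q, div_pow]; field_simp
  have hM0 : 0 ≤ M := by simpa using (norm_nonneg _).trans (ha 0)
  have hsum : HasSum (fun n ↦ a (n + 2)) (f w - (f c + (w - c) • deriv f c)) := by
    have htaylor := hasSum_taylorSeries_on_ball (hf.mono ball_subset_closedBall)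
      (mem_ball_iff_norm.2 (by linarith))
    simpa [Finset.sum_range_succ, a] using (hasSum_nat_add_iff' 2).2 htaylor
  have hgeom := (hasSum_geometric_of_lt_one (by positivity) (hq.trans_lt one_half_lt_one)).mul_left
    (M * q ^ 2)
  calc ‖f w - f c - (w - c) • deriv f c‖ ≤ M * q ^ 2 * (1 - q)⁻¹ := by
        rw [sub_sub]
        refine hsum.norm_le_of_bounded hgeom fun n ↦ (ha (n + 2)).trans_eq ?_
        ring
    _ ≤ M * q ^ 2 * 2 := by
        gcongr
        rw [inv_le_comm₀ (by linarith) two_pos]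
        linarith
    _ = 2 * M / r ^ 2 * ‖w - c‖ ^ 2 := by simp only [q, div_pow]; field_simp

theorem IsCompact.exists_prod_closedBall_subset {X Y : Type*} [TopologicalSpace X]
    [PseudoMetricSpace Y] {K : Set X} {U : Set (X × Y)} {y : Y} (hK : IsCompact K)
    (hU : IsOpen U) (hKU : K ×ˢ {y} ⊆ U) : ∃ r > 0, K ×ˢ closedBall y r ⊆ U := by
  obtain ⟨V, W, -, hW, hKV, hyW, hVW⟩ :=
    generalized_tube_lemma hK isCompact_singleton hU hKU
  obtain ⟨r, hr, hball⟩ := Metric.isOpen_iff.mp hW y (hyW rfl)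
  exact ⟨r / 2, by positivity, (Set.prod_mono hKV ((closedBall_subset_ball (by linarith)).trans
    hball)).trans hVW⟩

theorem Complex.norm_exp_sub_quadratic_le {u x : ℂ} (hx : ‖x‖ ≤ 1) (hux : ‖u - x‖ ≤ 1) :
    ‖exp u - (1 + x + x ^ 2 / 2)‖ ≤ 2 * Real.exp 1 * ‖u - x‖ + ‖x‖ ^ 3 := by
  have hfirst : ‖exp u - exp x‖ ≤ 2 * Real.exp 1 * ‖u - x‖ := by
    rw [show exp u - exp x = exp x * (exp (u - x) - 1) by rw [mul_sub, ← exp_add]; ring_nf,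
      norm_mul, norm_exp]
    calc Real.exp x.re * ‖exp (u - x) - 1‖ ≤ Real.exp 1 * (2 * ‖u - x‖) := by
          gcongr
          · exact (re_le_norm x).trans hx
          · exact norm_exp_sub_one_le hux
      _ = 2 * Real.exp 1 * ‖u - x‖ := by ring
  have hsecond : ‖exp x - (1 + x + x ^ 2 / 2)‖ ≤ ‖x‖ ^ 3 := by
    have h := exp_bound hx (n := 3) (by norm_num)
    norm_num [Finset.sum_range_succ, Nat.factorial] at h
    calc _ ≤ ‖x‖ ^ 3 * (2 / 9) := by convert h using 3
      _ ≤ ‖x‖ ^ 3 := by nlinarith [pow_nonneg (norm_nonneg x) 3]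
  calc ‖exp u - (1 + x + x ^ 2 / 2)‖
      = ‖(exp u - exp x) + (exp x - (1 + x + x ^ 2 / 2))‖ := by ring_nf
    _ ≤ _ := (norm_add_le _ _).trans (add_le_add hfirst hsecond)

theorem Complex.cpow_one_half_mul_self (a : ℂ) :
    a ^ ((1 : ℂ) / 2) * a ^ ((1 : ℂ) / 2) = a := by
  rw [← sq, one_div]
  exact_mod_cast cpow_ofNat_inv_pow a 2

theorem Complex.cpow_one_half_ne_zero {a : ℂ} (ha : a ≠ 0) : a ^ ((1 : ℂ) / 2) ≠ 0 :=
  (cpow_ne_zero_iff_of_exponent_ne_zero (by norm_num)).2 ha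

theorem HasDerivAt.cpow_one_half {f : ℂ → ℂ} {f' x : ℂ} (hf : HasDerivAt f f' x)
    (hx : f x ∈ slitPlane) :
    HasDerivAt (fun x ↦ f x ^ ((1 : ℂ) / 2)) (f' / (2 * f x ^ ((1 : ℂ) / 2))) x := by
  refine (hf.cpow_const hx).congr_deriv ?_
  have hne := cpow_one_half_ne_zero (slitPlane_ne_zero hx)
  rw [show (1 : ℂ) / 2 - 1 = -((1 : ℂ) / 2) by ring, cpow_neg]
  field_simp

def olverDomain : Set ℂ :=
  {w | 1 - w ^ 2 ∈ slitPlane ∧ (1 + (1 - w ^ 2) ^ ((1 : ℂ) / 2)) / w ∈ slitPlane}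

theorem ne_zero_of_mem_olverDomain {w : ℂ} (hw : w ∈ olverDomain) : w ≠ 0 := by
  rintro rfl
  simpa using hw.2

theorem hasDerivAt_olverRho {w : ℂ} (hw : w ∈ olverDomain) :
    HasDerivAt olverRho (-(1 - w ^ 2) ^ ((1 : ℂ) / 2) / w) w := by
  have hw0 := ne_zero_of_mem_olverDomain hw
  have hsqrt := ((hasDerivAt_pow 2 w).const_sub 1).cpow_one_half hw.1
  have hquot := ((hsqrt.const_add 1).div (hasDerivAt_id' w) hw0).clog hw.2
  refine (hquot.sub hsqrt).congr_deriv ?_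
  set q := (1 - w ^ 2) ^ ((1 : ℂ) / 2)
  have hq : q * q = 1 - w ^ 2 := cpow_one_half_mul_self _
  have hq0 : q ≠ 0 := cpow_one_half_ne_zero (slitPlane_ne_zero hw.1)
  have hq1 : 1 + q ≠ 0 := by
    intro h0; have := hw.2; rw [h0, zero_div] at this; exact slitPlane_ne_zero this rfl
  change (_ / (2 * q) * w - (1 + q) * 1) / w ^ 2 / ((1 + q) / w) - _ / (2 * q) = -q / w
  field_simp
  linear_combination 2 * q * hq

theorem isOpen_olverDomain : IsOpen olverDomain := by
  refine isOpen_iff_mem_nhds.2 fun w hw ↦ ?_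
  have hsq : ContinuousAt (fun w : ℂ ↦ 1 - w ^ 2) w := by fun_prop
  have hquot : ContinuousAt (fun w : ℂ ↦ (1 + (1 - w ^ 2) ^ ((1 : ℂ) / 2)) / w) w :=
    ((hsq.cpow continuousAt_const hw.1).const_add 1).div continuousAt_id
      (ne_zero_of_mem_olverDomain hw)
  exact (hsq.eventually_mem (isOpen_slitPlane.mem_nhds hw.1)).and
    (hquot.eventually_mem (isOpen_slitPlane.mem_nhds hw.2))

noncomputable def olverShift (z s : ℂ) : ℂ := z * (1 - s / z ^ 2) ^ ((1 : ℂ) / 2)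

theorem olverShift_zero (z : ℂ) : olverShift z 0 = z := by
  simp [olverShift]

theorem ztilde_eq_olverShift (V₀ ν : ℝ) (z : ℂ) :
    ztilde V₀ ν z = olverShift z ((V₀ / ν ^ 2 : ℝ) : ℂ) := by
  simp [ztilde, olverShift, div_div]

theorem hasDerivAt_olverShift {z s : ℂ} (hs : 1 - s / z ^ 2 ∈ slitPlane) :
    HasDerivAt (olverShift z) (z * (-(1 / z ^ 2) / (2 * (1 - s / z ^ 2) ^ ((1 : ℂ) / 2)))) s := by
  have h := (((hasDerivAt_id' s).div_const (z ^ 2)).const_sub 1).cpow_one_half hs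
  exact h.const_mul z

def olverShiftDomain : Set (ℂ × ℂ) :=
  {p | p.1 ≠ 0 ∧ 1 - p.2 / p.1 ^ 2 ∈ slitPlane ∧ olverShift p.1 p.2 ∈ olverDomain}

theorem zero_mem_olverShiftDomain {z : ℂ} (hz : z ∈ olverDomain) :
    (z, 0) ∈ olverShiftDomain :=
  ⟨ne_zero_of_mem_olverDomain hz, by simp [one_mem_slitPlane], by rwa [olverShift_zero]⟩

theorem hasDerivAt_olverRho_olverShift_zero {z : ℂ} (hz : z ∈ olverDomain) :
    HasDerivAt (fun s ↦ olverRho (olverShift z s))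
      ((1 - z ^ 2) ^ ((1 : ℂ) / 2) / (2 * z ^ 2)) 0 := by
  have hρ := hasDerivAt_olverRho hz
  rw [← olverShift_zero z] at hρ
  refine (hρ.comp 0 (hasDerivAt_olverShift (zero_mem_olverShiftDomain hz).2.1)).congr_deriv ?_
  simp only [olverShift_zero, zero_div, sub_zero, one_cpow]
  field_simp

theorem continuousAt_olverShift {p : ℂ × ℂ} (hp : p ∈ olverShiftDomain) :
    ContinuousAt (fun p : ℂ × ℂ ↦ olverShift p.1 p.2) p := by
  have hin : ContinuousAt (fun p : ℂ × ℂ ↦ 1 - p.2 / p.1 ^ 2) p :=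
    continuousAt_const.sub (continuousAt_snd.div (by fun_prop) (pow_ne_zero 2 hp.1))
  exact continuousAt_fst.mul (hin.cpow continuousAt_const hp.2.1)

theorem isOpen_olverShiftDomain : IsOpen olverShiftDomain := by
  refine isOpen_iff_mem_nhds.2 fun p hp ↦ ?_
  have hin : ContinuousAt (fun p : ℂ × ℂ ↦ 1 - p.2 / p.1 ^ 2) p :=
    continuousAt_const.sub (continuousAt_snd.div (by fun_prop) (pow_ne_zero 2 hp.1))
  exact (continuousAt_fst.eventually_ne hp.1).and
    ((hin.eventually_mem (isOpen_slitPlane.mem_nhds hp.2.1)).and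
    ((continuousAt_olverShift hp).eventually_mem (isOpen_olverDomain.mem_nhds hp.2.2)))

theorem continuousOn_olverRho_olverShift :
    ContinuousOn (fun p : ℂ × ℂ ↦ olverRho (olverShift p.1 p.2)) olverShiftDomain :=
  fun _ hp ↦ ((hasDerivAt_olverRho hp.2.2).continuousAt.comp
    (f := fun p : ℂ × ℂ ↦ olverShift p.1 p.2) (continuousAt_olverShift hp)).continuousWithinAt

theorem exists_norm_olverRho_olverShift_sub_le {Ω : Set ℂ} (hΩc : IsCompact Ω)
    (hΩ : Ω ⊆ olverDomain) :
    ∃ r > 0, ∃ K, ∀ z ∈ Ω, ∀ s : ℂ, ‖s‖ ≤ r →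
      ‖olverRho (olverShift z s) - olverRho z
          - s * ((1 - z ^ 2) ^ ((1 : ℂ) / 2) / (2 * z ^ 2))‖ ≤ K * ‖s‖ ^ 2 := by
  obtain ⟨r, hr, htube⟩ := hΩc.exists_prod_closedBall_subset isOpen_olverShiftDomain
    (by rintro ⟨z, s⟩ ⟨hz, rfl⟩; exact zero_mem_olverShiftDomain (hΩ hz))
  obtain ⟨M, hM⟩ := (hΩc.prod (isCompact_closedBall 0 r)).exists_bound_of_continuousOn
    (continuousOn_olverRho_olverShift.mono htube)
  refine ⟨r / 2, by positivity, 2 * M / r ^ 2, fun z hz s hs ↦ ?_⟩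
  have hdiff : DifferentiableOn ℂ (fun s ↦ olverRho (olverShift z s)) (closedBall 0 r) :=
    fun w hw ↦ by
      have hp : (z, w) ∈ olverShiftDomain := htube ⟨hz, hw⟩
      exact ((hasDerivAt_olverRho hp.2.2).comp w
        (hasDerivAt_olverShift hp.2.1)).differentiableAt.differentiableWithinAt
  have h := norm_sub_sub_smul_deriv_le hr hdiff
    (fun w hw ↦ hM (z, w) ⟨hz, sphere_subset_closedBall hw⟩) (w := s) (by simpa using hs)
  rwa [sub_zero, olverShift_zero, (hasDerivAt_olverRho_olverShift_zero (hΩ hz)).deriv,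
    smul_eq_mul] at h

theorem norm_exp_olverRho_ztilde_expansion_le {V₀ ν r K B : ℝ} {z : ℂ} (hz : z ≠ 0) (hr : 0 < r)
    (hν : 1 ≤ ν) (hνr : |V₀| / r ≤ ν) (hνB : |V₀| * B ≤ ν) (hνK : K * V₀ ^ 2 ≤ ν)
    (hK : ∀ s : ℂ, ‖s‖ ≤ r → ‖olverRho (olverShift z s) - olverRho z
      - s * ((1 - z ^ 2) ^ ((1 : ℂ) / 2) / (2 * z ^ 2))‖ ≤ K * ‖s‖ ^ 2)
    (hB : ‖(1 - z ^ 2) ^ ((1 : ℂ) / 2) / (2 * z ^ 2)‖ ≤ B) :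
    ‖(Complex.exp (-(ν : ℂ) * (olverRho (ztilde V₀ ν z) - olverRho z)) - 1
          + (V₀ : ℂ) * (1 - z ^ 2) ^ ((1 : ℂ) / 2) / (2 * (ν : ℂ) * z ^ 2)
          - (V₀ : ℂ) ^ 2 * (1 - z ^ 2) / (8 * (ν : ℂ) ^ 2 * z ^ 4))‖
      ≤ (2 * Real.exp 1 * K * V₀ ^ 2 + (|V₀| * B) ^ 3) / ν ^ 3 := by
  have hν0 : 0 < ν := one_pos.trans_le hν
  set s : ℂ := ((V₀ / ν ^ 2 : ℝ) : ℂ)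
  set d : ℂ := (1 - z ^ 2) ^ ((1 : ℂ) / 2) / (2 * z ^ 2)
  set Φ := olverRho (olverShift z s) - olverRho z
  set x := -(ν : ℂ) * s * d
  have hs : ‖s‖ = |V₀| / ν ^ 2 := by simp [s]
  have hsr : ‖s‖ ≤ r := by
    rw [hs, div_le_iff₀ (by positivity)]
    rw [div_le_iff₀ hr] at hνr
    nlinarith [mul_nonneg (mul_nonneg hr.le hν0.le) (sub_nonneg.2 hν)]
  have hx : ‖x‖ ≤ |V₀| * B / ν := by
    rw [norm_mul, norm_mul, norm_neg, hs, norm_real, Real.norm_of_nonneg hν0.le]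
    calc ν * (|V₀| / ν ^ 2) * ‖d‖ = |V₀| / ν * ‖d‖ := by field_simp
      _ ≤ |V₀| / ν * B := by gcongr
      _ = |V₀| * B / ν := by ring
  have hΦx : ‖-(ν : ℂ) * Φ - x‖ ≤ K * V₀ ^ 2 / ν ^ 3 := by
    rw [show -(ν : ℂ) * Φ - x = -(ν : ℂ) * (Φ - s * d) by ring, norm_mul, norm_neg, norm_real,
      Real.norm_of_nonneg hν0.le]
    calc ν * ‖Φ - s * d‖ ≤ ν * (K * ‖s‖ ^ 2) := by gcongr; exact hK s hsr
      _ = K * V₀ ^ 2 / ν ^ 3 := by rw [hs, div_pow, sq_abs]; field_simp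
  have hq := cpow_one_half_mul_self (1 - z ^ 2)
  have hνC : (ν : ℂ) ≠ 0 := ofReal_ne_zero.2 hν0.ne'
  have hexpansion : Complex.exp (-(ν : ℂ) * (olverRho (ztilde V₀ ν z) - olverRho z)) - 1
        + (V₀ : ℂ) * (1 - z ^ 2) ^ ((1 : ℂ) / 2) / (2 * (ν : ℂ) * z ^ 2)
        - (V₀ : ℂ) ^ 2 * (1 - z ^ 2) / (8 * (ν : ℂ) ^ 2 * z ^ 4)
      = Complex.exp (-(ν : ℂ) * Φ) - (1 + x + x ^ 2 / 2) := by
    rw [ztilde_eq_olverShift]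
    simp only [Φ, x, s, d]
    push_cast
    field_simp
    linear_combination 8 * (V₀ : ℂ) ^ 2 * hq
  rw [hexpansion]
  calc _ ≤ 2 * Real.exp 1 * (K * V₀ ^ 2 / ν ^ 3) + (|V₀| * B / ν) ^ 3 := by
        refine (norm_exp_sub_quadratic_le ?_ ?_).trans ?_
        · exact hx.trans (div_le_one_of_le₀ hνB hν0.le)
        · exact hΦx.trans (div_le_one_of_le₀ (hνK.trans (le_self_pow₀ hν three_ne_zero))
            (by positivity))
        · gcongr
    _ = _ := by ring

theorem stmt9_general (V₀ : ℝ) (Ω : Set ℂ) (hΩc : IsCompact Ω)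
    (h1 : ∀ z ∈ Ω, (1 - z ^ 2) ∈ Complex.slitPlane)
    (h2 : ∀ z ∈ Ω, (1 + (1 - z ^ 2) ^ ((1 : ℂ) / 2)) / z ∈ Complex.slitPlane) :
    ∃ C > 0, ∃ ν₀ > 0, ∀ ν : ℝ, ν₀ ≤ ν → ∀ z ∈ Ω,
      ‖(Complex.exp (-(ν : ℂ) * (olverRho (ztilde V₀ ν z) - olverRho z)) - 1
            + (V₀ : ℂ) * (1 - z ^ 2) ^ ((1 : ℂ) / 2) / (2 * (ν : ℂ) * z ^ 2)
            - (V₀ : ℂ) ^ 2 * (1 - z ^ 2) / (8 * (ν : ℂ) ^ 2 * z ^ 4))‖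
        ≤ C / ν ^ 3 := by
  have hΩ : Ω ⊆ olverDomain := fun z hz ↦ ⟨h1 z hz, h2 z hz⟩
  obtain ⟨r, hr, K, hK⟩ := exists_norm_olverRho_olverShift_sub_le hΩc hΩ
  obtain ⟨B, hB⟩ := hΩc.exists_bound_of_continuousOn
    (f := fun z : ℂ ↦ (1 - z ^ 2) ^ ((1 : ℂ) / 2) / (2 * z ^ 2)) fun z hz ↦
      ((((continuousAt_const.sub (continuousAt_id.pow 2)).cpow continuousAt_const
        (h1 z hz)).div (by fun_prop)
        (by simp [ne_zero_of_mem_olverDomain (hΩ hz)])).continuousWithinAt)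
  refine ⟨max (2 * Real.exp 1 * K * V₀ ^ 2 + (|V₀| * B) ^ 3) 1, by positivity,
    max 1 (max (|V₀| / r) (max (|V₀| * B) (K * V₀ ^ 2))), by positivity, fun ν hν z hz ↦ ?_⟩
  obtain ⟨h1ν, hrν, hBν, hKν⟩ : 1 ≤ ν ∧ |V₀| / r ≤ ν ∧ |V₀| * B ≤ ν ∧ K * V₀ ^ 2 ≤ ν := by
    simpa only [max_le_iff] using hν
  calc _ ≤ (2 * Real.exp 1 * K * V₀ ^ 2 + (|V₀| * B) ^ 3) / ν ^ 3 :=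
        norm_exp_olverRho_ztilde_expansion_le (ne_zero_of_mem_olverDomain (hΩ hz)) hr h1ν hrν hBν hKν
          (hK z hz) (hB z hz)
    _ ≤ _ := by gcongr; exact le_max_left _ _

/-- Let `Ω` be a compact subset of the open upper half-plane such that for
every `z ∈ Ω`, `1 − z² ∉ (−∞, 0]` and `(1 + (1 − z²)^{1/2})/z ∉ (−∞, 0]`. Let `V₀ > 0`.
Then there are `C > 0` and `ν₀ > 0` such that for all real `ν ≥ ν₀` and all `z ∈ Ω`,
`|e^{−ν(ρ(z̃) − ρ(z))} − 1 + V₀ (1 − z²)^{1/2}/(2 ν z²) − V₀² (1 − z²)/(8 ν² z⁴)| ≤ C/ν³`. -/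
theorem stmt9 (V₀ : ℝ) (hV₀ : 0 < V₀) (Ω : Set ℂ) (hΩc : IsCompact Ω)
    (hΩup : ∀ z ∈ Ω, 0 < z.im)
    (h1 : ∀ z ∈ Ω, (1 - z ^ 2) ∈ Complex.slitPlane)
    (h2 : ∀ z ∈ Ω, (1 + (1 - z ^ 2) ^ ((1 : ℂ) / 2)) / z ∈ Complex.slitPlane) :
    ∃ C > 0, ∃ ν₀ > 0, ∀ ν : ℝ, ν₀ ≤ ν → ∀ z ∈ Ω,
      ‖(Complex.exp (-(ν : ℂ) * (olverRho (ztilde V₀ ν z) - olverRho z)) - 1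
            + (V₀ : ℂ) * (1 - z ^ 2) ^ ((1 : ℂ) / 2) / (2 * (ν : ℂ) * z ^ 2)
            - (V₀ : ℂ) ^ 2 * (1 - z ^ 2) / (8 * (ν : ℂ) ^ 2 * z ^ 4))‖
        ≤ C / ν ^ 3 :=
  stmt9_general V₀ Ω hΩc h1 h2
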